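/- arXiv:1410.6296 — 3 statements merged into one kernel-verified Lean document; each statement's English description precedes it below -/
import Mathlib

section
/- Under the BI Model with estimator n̂_0 > 0 a measurable function of (F̂_n(t))_{t≥λ}, one has (1/λ)·E[V(λ)/n̂_0] = E[Σ_{i: H_i=0} 1/n̂_0^{(i)}], where n̂_0^{(i)} is the estimator evaluated at the p-value vector with the i-th coordinate replaced by 0. -/
/-!
On the event `{p_i ≤ λ}` replacing `p_i` by `0` does not change the counts `#{j : p_j ≤ t}` for
`t ≥ λ`, so `n̂₀ = n̂₀⁽ⁱ⁾` there and `V(λ)/n̂₀ = Σ_{i null} 1{U_i ≤ λ}/n̂₀⁽ⁱ⁾` pointwise. The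
estimator `n̂₀⁽ⁱ⁾` (together with `H_i`) is a function of the other uniforms and of `(H, ξ)`, hence
independent of `U_i`, and `P(U_i ≤ λ) = λ`; taking expectations term by term gives the identity.
-/

open MeasureTheory ProbabilityTheory Finset
open scoped Classical

/-- number of p-values `≤ t`. -/
noncomputable def countLe {n : ℕ} (p : Fin n → ℝ) (t : ℝ) : ℕ :=
  (Finset.univ.filter fun i => p i ≤ t).card

/-- step-up rejection count: `c i` is the `(i+1)`-th critical value; for nondecreasing
critical values this equals `max {k : p_{k:n} ≤ c_{k:n}}` (with `max ∅ = 0`). -/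
noncomputable def suCount {n : ℕ} (c : Fin n → ℝ) (p : Fin n → ℝ) : ℕ :=
  (Finset.univ.filter fun k : Fin n => k.1 + 1 ≤ countLe p (c k)).sup fun k => k.1 + 1

/-- step-down rejection count. -/
noncomputable def sdCount {n : ℕ} (c : Fin n → ℝ) (p : Fin n → ℝ) : ℕ :=
  (Finset.univ.filter fun k : Fin n =>
    ∀ j : Fin n, j ≤ k → j.1 + 1 ≤ countLe p (c j)).sup fun k => k.1 + 1

/-- the critical value `c_{R:n}`, with the convention `c_{0:n} = 0`. -/
noncomputable def threshold {n : ℕ} (c : Fin n → ℝ) (R : ℕ) : ℝ :=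
  if h : 0 < R ∧ R ≤ n then c ⟨R - 1, by omega⟩ else 0

/-- the σ-algebra generated by `(F̂_n(t))_{t ≥ λ}`. -/
noncomputable def ecdfSigma {Ω : Type*} [MeasurableSpace Ω] {n : ℕ}
    (p : Fin n → Ω → ℝ) (lam : ℝ) : MeasurableSpace Ω :=
  MeasurableSpace.comap
    (fun ω => fun t : Set.Ici lam => (countLe (fun i => p i ω) (t : ℝ) : ℝ))
    MeasurableSpace.pi

theorem countLe_update_of_le {n : ℕ} (p : Fin n → ℝ) (i : Fin n) {a t : ℝ} (ha : a ≤ t)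
    (hp : p i ≤ t) : countLe (Function.update p i a) t = countLe p t := by
  unfold countLe
  congr 1
  refine filter_congr fun j _ => ?_
  rcases eq_or_ne j i with rfl | hj
  · simp [ha, hp]
  · rw [Function.update_of_ne hj]

theorem card_div_eq_sum_one_div_update {n : ℕ} {lam : ℝ} (hlam : 0 ≤ lam)
    {e : (Fin n → ℝ) → ℝ}
    (he : ∀ q q' : Fin n → ℝ, (∀ t, lam ≤ t → countLe q t = countLe q' t) → e q = e q')
    (p : Fin n → ℝ) (s : Finset (Fin n)) (hs : ∀ i ∈ s, p i ≤ lam) :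
    (s.card : ℝ) / e p = ∑ i ∈ s, 1 / e (Function.update p i 0) := by
  rw [card_eq_sum_ones, Nat.cast_sum, sum_div]
  refine sum_congr rfl fun i hi => ?_
  rw [he _ p fun t ht => countLe_update_of_le p i (hlam.trans ht) ((hs i hi).trans ht),
    Nat.cast_one]

namespace ProbabilityTheory

variable {Ω : Type*} {mΩ : MeasurableSpace Ω} {μ : Measure Ω}

theorem indep_sup_right_of_indep_sup_left [IsZeroOrProbabilityMeasure μ]
    {m₁ m₂ m₃ : MeasurableSpace Ω} (h₁ : m₁ ≤ mΩ) (h₂ : m₂ ≤ mΩ) (h₃ : m₃ ≤ mΩ)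
    (h₁₂ : Indep m₁ m₂ μ) (h₁₂₃ : Indep (m₁ ⊔ m₂) m₃ μ) :
    Indep m₁ (m₂ ⊔ m₃) μ := by
  set p : Set (Set Ω) :=
    Set.image2 (· ∩ ·) {s | MeasurableSet[m₂] s} {s | MeasurableSet[m₃] s}
  have hgen : m₂ ⊔ m₃ = MeasurableSpace.generateFrom p := by
    refine le_antisymm (sup_le ?_ ?_) (MeasurableSpace.generateFrom_le ?_)
    · exact fun s hs => MeasurableSpace.measurableSet_generateFrom
        ⟨s, hs, Set.univ, MeasurableSet.univ, Set.inter_univ s⟩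
    · exact fun s hs => MeasurableSpace.measurableSet_generateFrom
        ⟨Set.univ, MeasurableSet.univ, s, hs, Set.univ_inter s⟩
    · rintro _ ⟨B, hB, C, hC, rfl⟩
      exact (le_sup_left (b := m₃) _ hB).inter (le_sup_right (a := m₂) _ hC)
  have hpi : IsPiSystem p := by
    rintro _ ⟨B, hB, C, hC, rfl⟩ _ ⟨B', hB', C', hC', rfl⟩ _
    exact ⟨B ∩ B', hB.inter hB', C ∩ C', hC.inter hC', Set.inter_inter_inter_comm B B' C C'⟩
  have h₂₃ : Indep m₂ m₃ μ := indep_of_indep_of_le_left h₁₂₃ le_sup_right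
  refine IndepSets.indep h₁ (sup_le h₂ h₃) (@MeasurableSpace.isPiSystem_measurableSet Ω m₁) hpi
    (@MeasurableSpace.generateFrom_measurableSet Ω m₁).symm hgen ?_
  rw [IndepSets_iff]
  rintro A _ hA ⟨B, hB, C, hC, rfl⟩
  calc μ (A ∩ (B ∩ C)) = μ (A ∩ B) * μ C := by
        rw [← Set.inter_assoc]
        exact (Indep_iff _ _ μ).1 h₁₂₃ _ _
          ((le_sup_left (b := m₂)) _ hA |>.inter (le_sup_right (a := m₁) _ hB)) hC
    _ = μ A * μ (B ∩ C) := by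
        rw [(Indep_iff _ _ μ).1 h₁₂ _ _ hA hB, (Indep_iff _ _ μ).1 h₂₃ _ _ hB hC, mul_assoc]

theorem iIndepFun.indepFun_prodMk_update {ι β γ : Type*} [DecidableEq ι]
    [MeasurableSpace β] [MeasurableSpace γ] [IsZeroOrProbabilityMeasure μ]
    {U : ι → Ω → β} {Z : Ω → γ} (hU : ∀ i, Measurable (U i)) (hZ : Measurable Z)
    (hUind : iIndepFun U μ) (hUZ : IndepFun (fun ω i => U i ω) Z μ) (i : ι) (c : β) :
    IndepFun (U i) (fun ω => (Function.update (fun j => U j ω) i c, Z ω)) μ := by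
  set V : Ω → ι → β := fun ω => Function.update (fun j => U j ω) i c
  have hV : Measurable V := measurable_update_left.comp (measurable_pi_lambda _ hU)
  have hUi_le : MeasurableSpace.comap (U i) inferInstance
      ≤ ⨆ j ∈ ({i} : Set ι), MeasurableSpace.comap (U j) inferInstance :=
    le_iSup₂ (f := fun j (_ : j ∈ ({i} : Set ι)) => MeasurableSpace.comap (U j) inferInstance)
      i rfl
  have hV_le : MeasurableSpace.comap V inferInstance
      ≤ ⨆ j ∈ ({i}ᶜ : Set ι), MeasurableSpace.comap (U j) inferInstance := by
    refine (MeasurableSpace.comap_process_pi fun j ω => V ω j).trans_le (iSup_le fun j => ?_)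
    by_cases hj : j = i
    · subst hj
      simp [V]
    · simp only [V, Function.update_of_ne hj]
      exact le_iSup₂ (f := fun j (_ : j ∈ ({i}ᶜ : Set ι)) =>
          MeasurableSpace.comap (U j) inferInstance) j hj
  have h₁₂ : Indep (MeasurableSpace.comap (U i) inferInstance)
      (MeasurableSpace.comap V inferInstance) μ :=
    indep_of_indep_of_le_right (indep_of_indep_of_le_left
      (indep_iSup_of_disjoint (fun j => (hU j).comap_le)
        ((iIndepFun_iff_iIndep _ _ _).1 hUind) (Set.disjoint_singleton_left.2 (by simp)))
      hUi_le) hV_le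
  have hsup_le : MeasurableSpace.comap (U i) inferInstance ⊔ MeasurableSpace.comap V inferInstance
      ≤ MeasurableSpace.comap (fun ω j => U j ω) inferInstance :=
    sup_le (MeasurableSpace.comap_le_comap_of_eq_comp _ (measurable_pi_apply i) rfl)
      (MeasurableSpace.comap_le_comap_of_eq_comp _ measurable_update_left rfl)
  rw [IndepFun_iff_Indep]
  erw [MeasurableSpace.comap_prodMk V Z]
  exact indep_sup_right_of_indep_sup_left (hU i).comap_le hV.comap_le hZ.comap_le h₁₂
    (indep_of_indep_of_le_left ((IndepFun_iff_Indep _ _ _).1 hUZ) hsup_le)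

theorem measure_preimage_Iic_of_map_eq_restrict_Ioo {U : Ω → ℝ} (hU : Measurable U)
    (hmap : μ.map U = volume.restrict (Set.Ioo 0 1)) {t : ℝ} (ht : t ≤ 1) :
    μ (U ⁻¹' Set.Iic t) = ENNReal.ofReal t := by
  rw [← Measure.map_apply hU measurableSet_Iic, hmap, Measure.restrict_congr_set Ioo_ae_eq_Ioc,
    Measure.restrict_apply measurableSet_Iic, Set.Iic_inter_Ioc_of_le ht, Real.volume_Ioc,
    sub_zero]

/-- No integrability is assumed: the identity is proved for the lintegrals, and `toReal` sends
both sides to the junk value `0` together. -/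
theorem integral_sum_indicator_eq_mul_integral_sum {ι : Type*} (s : Finset ι)
    {A : ι → Set Ω} {Y : ι → Ω → ℝ} {c : ℝ} (hc : 0 ≤ c) (hA : ∀ i, MeasurableSet (A i))
    (hμA : ∀ i, μ (A i) = ENNReal.ofReal c) (hY : ∀ i, Measurable (Y i))
    (hY0 : ∀ i ω, 0 ≤ Y i ω) (hind : ∀ i, IndepFun ((A i).indicator (1 : Ω → ℝ)) (Y i) μ) :
    ∫ ω, ∑ i ∈ s, (A i).indicator (Y i) ω ∂μ = c * ∫ ω, ∑ i ∈ s, Y i ω ∂μ := by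
  have hterm : ∀ i, ∫⁻ ω, ENNReal.ofReal ((A i).indicator (Y i) ω) ∂μ
      = ENNReal.ofReal c * ∫⁻ ω, ENNReal.ofReal (Y i ω) ∂μ := by
    intro i
    have hprod : ∀ ω, ENNReal.ofReal ((A i).indicator (Y i) ω)
        = ENNReal.ofReal ((A i).indicator 1 ω) * ENNReal.ofReal (Y i ω) := by
      intro ω
      by_cases h : ω ∈ A i <;> simp [h]
    have hA1 : ∀ ω, ENNReal.ofReal ((A i).indicator 1 ω) = (A i).indicator 1 ω := by
      intro ω
      by_cases h : ω ∈ A i <;> simp [h]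
    rw [lintegral_congr hprod, lintegral_mul_eq_lintegral_mul_lintegral_of_indepFun''
      (measurable_one.indicator (hA i)).ennreal_ofReal.aemeasurable
      (hY i).ennreal_ofReal.aemeasurable
      ((hind i).comp ENNReal.measurable_ofReal ENNReal.measurable_ofReal),
      lintegral_congr hA1, lintegral_indicator_one (hA i), hμA i]
  have hlin : ∫⁻ ω, ENNReal.ofReal (∑ i ∈ s, (A i).indicator (Y i) ω) ∂μ
      = ENNReal.ofReal c * ∫⁻ ω, ENNReal.ofReal (∑ i ∈ s, Y i ω) ∂μ := by
    simp_rw [ENNReal.ofReal_sum_of_nonneg fun i _ => Set.indicator_nonneg (fun ω _ => hY0 i ω) _,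
      ENNReal.ofReal_sum_of_nonneg fun i _ => hY0 i _]
    rw [lintegral_finsetSum _ fun i _ => ((hY i).indicator (hA i)).ennreal_ofReal,
      lintegral_finsetSum _ fun i _ => (hY i).ennreal_ofReal, mul_sum]
    exact sum_congr rfl fun i _ => hterm i
  rw [integral_eq_lintegral_of_nonneg_ae
      (ae_of_all _ fun ω => sum_nonneg fun i _ => Set.indicator_nonneg (fun ω _ => hY0 i ω) ω)
      (Finset.measurable_sum _ fun i _ => (hY i).indicator (hA i)).aestronglyMeasurable,
    integral_eq_lintegral_of_nonneg_ae (ae_of_all _ fun ω => sum_nonneg fun i _ => hY0 i ω)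
      (Finset.measurable_sum _ fun i _ => hY i).aestronglyMeasurable,
    hlin, ENNReal.toReal_mul, ENNReal.toReal_ofReal hc]

end ProbabilityTheory

theorem Measurable.pi_ite {α ι β : Type*} [MeasurableSpace α] [MeasurableSpace β]
    {b : α → ι → Bool} {f g : α → ι → β} (hb : Measurable b) (hf : Measurable f)
    (hg : Measurable g) : Measurable fun a j => if b a j then f a j else g a j :=
  measurable_pi_lambda _ fun j =>
    Measurable.ite ((hb.eval (a := j)) (measurableSet_singleton true)) hf.eval hg.eval

theorem indepFun_leaveOneOut {Ω ι : Type*} [MeasurableSpace Ω] {μ : Measure Ω}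
    [IsZeroOrProbabilityMeasure μ] [DecidableEq ι] {H : ι → Ω → Bool} {U ξ : ι → Ω → ℝ}
    (hUmeas : ∀ i, Measurable (U i)) (hξmeas : ∀ i, Measurable (ξ i))
    (hHmeas : ∀ i, Measurable (H i)) (hUindep : iIndepFun U μ)
    (hUHξ : IndepFun (fun ω i => U i ω) (fun ω => ((fun i => H i ω), (fun i => ξ i ω))) μ)
    (i : ι) :
    IndepFun (U i)
      (fun ω => (H i ω, Function.update (fun j => if H j ω then ξ j ω else U j ω) i 0)) μ := by
  set G : (ι → ℝ) × (ι → Bool) × (ι → ℝ) → Bool × (ι → ℝ) := fun v =>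
    (v.2.1 i, Function.update (fun j => if v.2.1 j then v.2.2 j else v.1 j) i 0)
  have hG : Measurable G := (measurable_snd.fst.eval).prodMk
    (measurable_update_left.comp (Measurable.pi_ite measurable_snd.fst measurable_snd.snd
      measurable_fst))
  have hZ : Measurable fun ω => ((fun i => H i ω), (fun i => ξ i ω)) :=
    (measurable_pi_lambda _ hHmeas).prodMk (measurable_pi_lambda _ hξmeas)
  have hGW : (fun ω => (H i ω, Function.update (fun j => if H j ω then ξ j ω else U j ω) i 0))
      = G ∘ fun ω => (Function.update (fun j => U j ω) i 0, (fun j => H j ω), fun j => ξ j ω) := by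
    funext ω
    refine Prod.ext rfl (funext fun j => ?_)
    rcases eq_or_ne j i with rfl | hj
    · simp [G]
    · simp [G, Function.update_of_ne hj]
  rw [hGW]
  exact (hUindep.indepFun_prodMk_update hUmeas hZ hUHξ i 0).comp measurable_id hG

theorem leave_one_out_identity_general {Ω : Type*} [MeasurableSpace Ω]
    (μ : Measure Ω) [IsProbabilityMeasure μ] {m : ℕ}
    (H : Fin (m + 1) → Ω → Bool) (U ξ : Fin (m + 1) → Ω → ℝ)
    (hUmeas : ∀ i, Measurable (U i)) (hξmeas : ∀ i, Measurable (ξ i))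
    (hHmeas : ∀ i, Measurable (H i))
    (hUindep : iIndepFun U μ)
    (hUHξ : IndepFun (fun ω => fun i => U i ω)
      (fun ω => ((fun i => H i ω), (fun i => ξ i ω))) μ)
    (hunif : ∀ i, Measure.map (U i) μ = volume.restrict (Set.Ioo (0 : ℝ) 1))
    (lam : ℝ) (hlam : lam ∈ Set.Ioo (0 : ℝ) 1)
    (e : (Fin (m + 1) → ℝ) → ℝ) (hemeas : Measurable e) (hepos : ∀ q, 0 < e q)
    (hecdf : ∀ q q' : Fin (m + 1) → ℝ,
      (∀ t, lam ≤ t → countLe q t = countLe q' t) → e q = e q') :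
    (1 / lam) *
      ∫ ω,
        (((Finset.univ.filter fun i : Fin (m + 1) =>
            (if H i ω then ξ i ω else U i ω) ≤ lam ∧ H i ω = false).card : ℝ)
          / e (fun i => if H i ω then ξ i ω else U i ω)) ∂μ
    = ∫ ω,
        (∑ i ∈ Finset.univ.filter fun i : Fin (m + 1) => H i ω = false,
          1 / e (Function.update (fun j => if H j ω then ξ j ω else U j ω) i 0)) ∂μ := by
  obtain ⟨hlam0, hlam1⟩ := hlam
  set φ : Bool × (Fin (m + 1) → ℝ) → ℝ := fun v => if v.1 = false then 1 / e v.2 else 0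
  have hφ : Measurable φ :=
    Measurable.ite (measurable_fst (measurableSet_singleton false))
      (measurable_const.div (hemeas.comp measurable_snd)) measurable_const
  set Y : Fin (m + 1) → Ω → ℝ := fun i ω =>
    φ (H i ω, Function.update (fun j => if H j ω then ξ j ω else U j ω) i 0)
  have hY : ∀ i, Measurable (Y i) := fun i =>
    hφ.comp <| (hHmeas i).prodMk <| measurable_update_left.comp <| Measurable.pi_ite
      (measurable_pi_lambda _ hHmeas) (measurable_pi_lambda _ hξmeas)
      (measurable_pi_lambda _ hUmeas)
  trans (1 / lam) * ∫ ω, ∑ i, (U i ⁻¹' Set.Iic lam).indicator (Y i) ω ∂μ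
  · refine congrArg _ (integral_congr_ae (ae_of_all _ fun ω => ?_))
    beta_reduce
    rw [card_div_eq_sum_one_div_update hlam0.le hecdf _ _ fun i hi => (mem_filter.1 hi).2.1,
      sum_filter]
    refine sum_congr rfl fun i _ => ?_
    cases hH : H i ω <;> by_cases hU : U i ω ≤ lam <;> simp [Y, φ, hH, hU]
  rw [integral_sum_indicator_eq_mul_integral_sum _ hlam0.le
      (fun i => hUmeas i measurableSet_Iic)
      (fun i => measure_preimage_Iic_of_map_eq_restrict_Ioo (hUmeas i) (hunif i) hlam1.le) hY
      (fun i ω => ite_nonneg (one_div_nonneg.2 (hepos _).le) le_rfl)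
      (fun i => (indepFun_leaveOneOut hUmeas hξmeas hHmeas hUindep hUHξ i).comp
        (measurable_one.indicator measurableSet_Iic) hφ),
    ← mul_assoc, one_div_mul_cancel hlam0.ne', one_mul]
  exact integral_congr_ae (ae_of_all _ fun ω => (sum_filter _ _).symm)

/-- Leave-one-out identity: under the BI model, for an estimator `n̂₀ = e(p) > 0` that is
a measurable function of `(F̂_n(t))_{t ≥ λ}`,
`(1/λ)·E[V(λ)/n̂₀] = E[Σ_{i : H_i = 0} 1/n̂₀⁽ⁱ⁾]`, where `n̂₀⁽ⁱ⁾ = e(p⁽ⁱ⁾)` with the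
`i`-th p-value replaced by `0`. -/
theorem leave_one_out_identity {Ω : Type*} [MeasurableSpace Ω]
    (μ : Measure Ω) [IsProbabilityMeasure μ] {m : ℕ}
    (H : Fin (m + 1) → Ω → Bool) (U ξ : Fin (m + 1) → Ω → ℝ)
    (hUmeas : ∀ i, Measurable (U i)) (hξmeas : ∀ i, Measurable (ξ i))
    (hHmeas : ∀ i, Measurable (H i))
    (hUindep : iIndepFun U μ)
    (hUHξ : IndepFun (fun ω => fun i => U i ω)
      (fun ω => ((fun i => H i ω), (fun i => ξ i ω))) μ)
    (hunif : ∀ i, Measure.map (U i) μ = volume.restrict (Set.Ioo (0 : ℝ) 1))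
    (hξrange : ∀ i ω, ξ i ω ∈ Set.Icc (0 : ℝ) 1)
    (lam : ℝ) (hlam : lam ∈ Set.Ioo (0 : ℝ) 1)
    (e : (Fin (m + 1) → ℝ) → ℝ) (hemeas : Measurable e) (hepos : ∀ q, 0 < e q)
    (hecdf : ∀ q q' : Fin (m + 1) → ℝ,
      (∀ t, lam ≤ t → countLe q t = countLe q' t) → e q = e q') :
    (1 / lam) *
      ∫ ω,
        (((Finset.univ.filter fun i : Fin (m + 1) =>
            (if H i ω then ξ i ω else U i ω) ≤ lam ∧ H i ω = false).card : ℝ)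
          / e (fun i => if H i ω then ξ i ω else U i ω)) ∂μ
    = ∫ ω,
        (∑ i ∈ Finset.univ.filter fun i : Fin (m + 1) => H i ω = false,
          1 / e (Function.update (fun j => if H j ω then ξ j ω else U j ω) i 0)) ∂μ :=
  leave_one_out_identity_general μ H U ξ hUmeas hξmeas hHmeas hUindep hUHξ hunif lam hlam e hemeas
    hepos hecdf
end

section
/- Let p = (p_1,...,p_n) and p^{(1)} = (0, p_2,...,p_n), and for nondecreasing critical values 0 < α_{1:n} ≤ ... ≤ α_{n:n} < 1 define the step-down count R_SD(p) = max{i : p_{j:n} ≤ α_{j:n} for all j ≤ i} (max∅ = 0). Then R_SD(p) = R_SD(p^{(1)}) on {p_1 ≤ α_{R_SD(p):n}}, and {p_1 ≤ α_{R_SD(p):n}} ⊆ {p_1 ≤ α_{R_SD(p^{(1)}):n}}. -/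
open MeasureTheory ProbabilityTheory Finset
open scoped Classical

/-!
Lowering `p_1` to `0` can only raise every count `#{i : p_i ≤ t}`, hence can only raise the
step-down count `R`. If `R = n` there is no room to grow. Otherwise the procedure stops because
`#{i : p_i ≤ α_{R+1:n}} < R + 1`; when `p_1 ≤ α_{R:n} ≤ α_{R+1:n}`, moving `p_1` to `0` does not
change this count, so the procedure applied to `p⁽¹⁾` stops at the same place.
-/

open Function

section StepDown

variable {n : ℕ} {c p : Fin n → ℝ}

lemma countLe_antitone (t : ℝ) : Antitone fun p : Fin n → ℝ => countLe p t :=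
  fun _ _ hqp => card_le_card fun i hi => by
    simp only [mem_filter, mem_univ, true_and] at hi ⊢
    exact (hqp i).trans hi

lemma countLe_update_of_le_s15 {i : Fin n} {x t : ℝ} (hpi : p i ≤ t) (hx : x ≤ t) :
    countLe (update p i x) t = countLe p t := by
  unfold countLe
  congr 1
  refine filter_congr fun j _ => ?_
  by_cases hj : j = i
  · subst hj
    simp [hpi, hx]
  · simp [update_of_ne hj]

lemma sdCount_le (c p : Fin n → ℝ) : sdCount c p ≤ n :=
  Finset.sup_le fun k _ => k.2

lemma sdCount_antitone (c : Fin n → ℝ) : Antitone (sdCount c) :=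
  fun _ _ hqp => Finset.sup_mono <| monotone_filter_right _ fun _ _ hk j hj =>
    (hk j hj).trans (countLe_antitone _ hqp)

lemma le_countLe_of_lt_sdCount {j : Fin n} (hj : j.1 < sdCount c p) :
    j.1 + 1 ≤ countLe p (c j) := by
  obtain ⟨k, hk, hjk⟩ := Finset.lt_sup_iff.1 hj
  simp only [mem_filter, mem_univ, true_and] at hk
  exact hk j (Fin.le_def.2 (Nat.lt_succ_iff.1 hjk))

lemma sdCount_le_of_countLe_lt {k : Fin n} (hk : countLe p (c k) < k.1 + 1) :
    sdCount c p ≤ k.1 :=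
  Finset.sup_le fun k' hk' => by
    simp only [mem_filter, mem_univ, true_and] at hk'
    by_contra! hlt
    exact (hk' k (Fin.le_def.2 (by omega))).not_gt hk

lemma countLe_lt_of_sdCount_eq {k : Fin n} (hk : sdCount c p = k.1) :
    countLe p (c k) < k.1 + 1 := by
  by_contra! hge
  have hmem : k ∈ univ.filter fun k' : Fin n =>
      ∀ j : Fin n, j ≤ k' → j.1 + 1 ≤ countLe p (c j) := by
    simp only [mem_filter, mem_univ, true_and]
    intro j hj
    rcases (Fin.le_def.1 hj).lt_or_eq with hlt | heq
    · exact le_countLe_of_lt_sdCount (hk ▸ hlt)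
    · exact Fin.ext heq ▸ hge
  have := Finset.le_sup (f := fun k : Fin n => k.1 + 1) hmem
  rw [← sdCount, hk] at this
  omega

lemma threshold_le (hmono : Monotone c) {R : ℕ} {k : Fin n} (hRk : R ≤ k.1) (hk : 0 ≤ c k) :
    threshold c R ≤ c k := by
  unfold threshold
  split_ifs with hR
  · exact hmono (Fin.le_def.2 (by simp only; omega))
  · exact hk

end StepDown

theorem stepDown_leave_one_out_general {m : ℕ} (c : Fin (m + 1) → ℝ) (hmono : Monotone c)
    (hc0 : 0 < c 0)
    (p : Fin (m + 1) → ℝ) (hp : p 0 ∈ Set.Icc (0 : ℝ) 1) :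
    (p 0 ≤ threshold c (sdCount c p) →
      sdCount c p = sdCount c (Function.update p 0 0)) ∧
    (p 0 ≤ threshold c (sdCount c p) →
      p 0 ≤ threshold c (sdCount c (Function.update p 0 0))) := by
  have hsame (h : p 0 ≤ threshold c (sdCount c p)) :
      sdCount c p = sdCount c (update p 0 0) := by
    have hge : sdCount c p ≤ sdCount c (update p 0 0) :=
      sdCount_antitone c (update_le_self_iff.2 hp.1)
    refine le_antisymm hge ?_
    rcases (sdCount_le c p).lt_or_eq with hlt | heq
    · let k : Fin (m + 1) := ⟨sdCount c p, hlt⟩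
      have hck : 0 ≤ c k := hc0.le.trans (hmono (Fin.zero_le k))
      have hpk : p 0 ≤ c k := h.trans (threshold_le hmono le_rfl hck)
      have hstop := countLe_lt_of_sdCount_eq (k := k) rfl
      rw [← countLe_update_of_le_s15 hpk hck] at hstop
      exact sdCount_le_of_countLe_lt hstop
    · exact heq.symm ▸ sdCount_le c _
  exact ⟨hsame, fun h => hsame h ▸ h⟩

/-- Leave-one-out stability of the step-down count: with `p⁽¹⁾ = (0, p_2, …, p_n)`,
`R_SD(p) = R_SD(p⁽¹⁾)` on `{p_1 ≤ α_{R_SD(p):n}}`, and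
`{p_1 ≤ α_{R_SD(p):n}} ⊆ {p_1 ≤ α_{R_SD(p⁽¹⁾):n}}`. -/
theorem stepDown_leave_one_out {m : ℕ} (c : Fin (m + 1) → ℝ) (hmono : Monotone c)
    (hc0 : 0 < c 0) (hc1 : c (Fin.last m) < 1)
    (p : Fin (m + 1) → ℝ) (hp : p 0 ∈ Set.Icc (0 : ℝ) 1) :
    (p 0 ≤ threshold c (sdCount c p) →
      sdCount c p = sdCount c (Function.update p 0 0)) ∧
    (p 0 ≤ threshold c (sdCount c p) →
      p 0 ≤ threshold c (sdCount c (Function.update p 0 0))) :=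
  stepDown_leave_one_out_general c hmono hc0 p hp
end

section
/- Under the BI Model, for the Benjamini–Hochberg step-up test with critical values α_{i:n} = (i/n)α, α ∈ (0,1), the FDR equals (E[N_0]/n)·α, where N_0 = Σ_{i=1}^n (1 - H_i) is the (random) number of true null hypotheses. -/
open MeasureTheory ProbabilityTheory Finset
open scoped Classical

/-!
Fix the configuration `(H, ξ)` and write `R` for the number of BH rejections and `R_i` for the
number of rejections after `p_i` is replaced by `0`. For a step-up test with nondecreasing
nonnegative critical values `c`, `p_i ≤ c_R` holds iff `p_i ≤ c_{R_i}`, and then `R = R_i`; so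
the false discovery proportion is `∑_{i null} 1{p_i ≤ c_{R_i}} / R_i`. For a true null
`p_i = U_i` is uniform and independent of `R_i`, which depends only on the other p-values, so the
`i`-th term has expectation `E[c_{R_i} / R_i] = α / n` because the BH critical values are linear.
Summing over the nulls gives `n₀ α / n` for each configuration, and integrating over `(H, ξ)`
gives the theorem.
-/

section StepUp

variable {n : ℕ} {c p : Fin n → ℝ} {i : Fin n}

lemma countLe_update_zero_of_le {t : ℝ} (ht : 0 ≤ t) (hi : p i ≤ t) :
    countLe (Function.update p i 0) t = countLe p t := by
  unfold countLe
  congr 1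
  refine Finset.filter_congr fun j _ => ?_
  rcases eq_or_ne j i with rfl | hne
  · simp [ht, hi]
  · simp [hne]

lemma countLe_le_countLe_update_zero {t : ℝ} (ht : 0 ≤ t) :
    countLe p t ≤ countLe (Function.update p i 0) t := by
  refine Finset.card_le_card (Finset.monotone_filter_right _ fun j _ hj => ?_)
  rcases eq_or_ne j i with rfl | hne
  · simpa using ht
  · simpa [hne] using hj

lemma le_suCount {k : Fin n} (hk : k.1 + 1 ≤ countLe p (c k)) : k.1 + 1 ≤ suCount c p :=
  Finset.le_sup (f := fun k : Fin n => k.1 + 1) (Finset.mem_filter.2 ⟨Finset.mem_univ _, hk⟩)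

lemma suCount_le (c p : Fin n → ℝ) : suCount c p ≤ n :=
  Finset.sup_le fun k _ => k.isLt

lemma threshold_succ (k : Fin n) : threshold c (k.1 + 1) = c k := by
  simp [threshold, k.isLt]

lemma threshold_zero : threshold c 0 = 0 := by
  simp [threshold]

lemma threshold_mono (hc : Monotone c) (hc0 : 0 ≤ c) {R S : ℕ} (hRS : R ≤ S) (hS : S ≤ n) :
    threshold c R ≤ threshold c S := by
  obtain rfl | hR := R.eq_zero_or_pos
  · rw [threshold_zero]
    obtain rfl | hS0 := S.eq_zero_or_pos
    · rw [threshold_zero]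
    · simpa [threshold, hS0, hS] using hc0 _
  · simpa [threshold, hR, hS, hRS.trans hS, show 0 < S by omega] using hc (by simp; omega)

lemma threshold_nonneg (hc0 : 0 ≤ c) (R : ℕ) : 0 ≤ threshold c R := by
  unfold threshold
  split_ifs
  exacts [hc0 _, le_rfl]

lemma threshold_mem_Icc (hc0 : 0 ≤ c) (hc1 : c ≤ 1) (R : ℕ) : threshold c R ∈ Set.Icc 0 1 := by
  unfold threshold
  split_ifs
  exacts [⟨hc0 _, hc1 _⟩, ⟨le_rfl, zero_le_one⟩]

lemma le_suCount_of_le_countLe_threshold {R : ℕ} (hR : 0 < R) (hRn : R ≤ n)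
    (h : R ≤ countLe p (threshold c R)) : R ≤ suCount c p := by
  obtain ⟨k, rfl⟩ : ∃ k : Fin n, k.1 + 1 = R := ⟨⟨R - 1, by omega⟩, by simp; omega⟩
  rw [threshold_succ] at h
  exact le_suCount h

lemma suCount_le_countLe_threshold : suCount c p ≤ countLe p (threshold c (suCount c p)) := by
  rcases (Finset.univ.filter fun k : Fin n => k.1 + 1 ≤ countLe p (c k)).eq_empty_or_nonempty
    with h | hne
  · rw [suCount, h, Finset.sup_empty]
    exact Nat.zero_le _
  · obtain ⟨k, hk, hsup⟩ := Finset.exists_mem_eq_sup _ hne fun k : Fin n => k.1 + 1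
    rw [suCount, hsup, threshold_succ]
    exact (Finset.mem_filter.1 hk).2

lemma one_le_suCount_of_le (hi : p i ≤ c ⟨0, i.pos⟩) : 1 ≤ suCount c p :=
  le_suCount (k := ⟨0, i.pos⟩) (Finset.card_pos.2 ⟨i, by simpa [countLe] using hi⟩)

lemma one_le_suCount_update_zero (hc0 : 0 ≤ c) : 1 ≤ suCount c (Function.update p i 0) :=
  one_le_suCount_of_le (i := i) (by simpa using hc0 _)

lemma suCount_update_zero_eq (hc : Monotone c) (hc0 : 0 ≤ c)
    (hi : p i ≤ threshold c (suCount c p)) :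
    suCount c (Function.update p i 0) = suCount c p := by
  set R := suCount c p
  have hR : 0 < R := by
    by_contra! hR0
    rw [Nat.le_zero.1 hR0, threshold_zero] at hi
    have := one_le_suCount_of_le (c := c) (hi.trans (hc0 _))
    omega
  refine le_antisymm (Finset.sup_le fun k hk => ?_)
    (le_suCount_of_le_countLe_threshold hR (suCount_le c p) ?_)
  · replace hk := (Finset.mem_filter.1 hk).2
    by_cases hik : p i ≤ c k
    · rw [countLe_update_zero_of_le (hc0 k) hik] at hk
      exact le_suCount hk
    · by_contra! hkR
      rw [← threshold_succ (c := c)] at hik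
      exact hik (hi.trans (threshold_mono hc hc0 hkR.le k.isLt))
  · exact suCount_le_countLe_threshold.trans
      (countLe_le_countLe_update_zero (threshold_nonneg hc0 R))

lemma le_threshold_suCount_update_zero_iff (hc : Monotone c) (hc0 : 0 ≤ c) :
    p i ≤ threshold c (suCount c (Function.update p i 0)) ↔ p i ≤ threshold c (suCount c p) := by
  refine ⟨fun hi => ?_, fun hi => by rwa [suCount_update_zero_eq hc hc0 hi]⟩
  set R := suCount c (Function.update p i 0)
  have hRp : R ≤ suCount c p := by
    refine le_suCount_of_le_countLe_threshold (one_le_suCount_update_zero hc0)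
      (suCount_le _ _) ?_
    rw [← countLe_update_zero_of_le (threshold_nonneg hc0 R) hi]
    exact suCount_le_countLe_threshold
  exact hi.trans (threshold_mono hc hc0 hRp (suCount_le _ _))

/-- The false discovery proportion of the step-up test with critical values `c`, the true null
hypotheses being the `i` with `h i = false`. -/
noncomputable def fdp (c : Fin n → ℝ) (h : Fin n → Bool) (p : Fin n → ℝ) : ℝ :=
  (#{i | p i ≤ threshold c (suCount c p) ∧ h i = false} : ℝ) / (max (suCount c p) 1 : ℕ)

lemma ite_div_max_suCount_eq (hc : Monotone c) (hc0 : 0 ≤ c) :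
    (if p i ≤ threshold c (suCount c p) then 1 else 0 : ℝ) / (max (suCount c p) 1 : ℕ) =
      if p i ≤ threshold c (suCount c (Function.update p i 0))
      then ((suCount c (Function.update p i 0) : ℕ) : ℝ)⁻¹ else 0 := by
  simp only [le_threshold_suCount_update_zero_iff hc hc0]
  split_ifs with hi
  · rw [suCount_update_zero_eq hc hc0 hi, max_eq_left, one_div]
    exact (suCount_update_zero_eq hc hc0 hi) ▸ one_le_suCount_update_zero hc0
  · exact zero_div _

lemma fdp_eq_sum (hc : Monotone c) (hc0 : 0 ≤ c) (h : Fin n → Bool) :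
    fdp c h p = ∑ i with h i = false, if p i ≤ threshold c (suCount c (Function.update p i 0))
      then ((suCount c (Function.update p i 0) : ℕ) : ℝ)⁻¹ else 0 := by
  simp_rw [fdp, ← ite_div_max_suCount_eq hc hc0, ← Finset.sum_div, Finset.sum_boole]
  congr 3
  ext i
  simp [and_comm]

lemma measurable_countLe (t : ℝ) : Measurable fun p : Fin n → ℝ => countLe p t := by
  simp_rw [countLe, Finset.card_filter]
  exact Finset.measurable_sum _ fun i _ =>
    Measurable.ite (measurableSet_le (measurable_pi_apply i) measurable_const)
      measurable_const measurable_const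

lemma measurable_suCount (c : Fin n → ℝ) : Measurable (suCount c) :=
  show Measurable ((fun v : Fin n → ℕ =>
      (Finset.univ.filter fun k : Fin n => k.1 + 1 ≤ v k).sup fun k => k.1 + 1) ∘
      fun p k => countLe p (c k)) from
    (measurable_of_countable _).comp (measurable_pi_lambda _ fun k => measurable_countLe (c k))

lemma measurable_fdp (c : Fin n → ℝ) :
    Measurable fun x : (Fin n → Bool) × (Fin n → ℝ) => fdp c x.1 x.2 := by
  refine measurable_from_prod_countable_right fun h => ?_
  simp_rw [fdp, Finset.card_filter, Nat.cast_sum, Nat.cast_ite, Nat.cast_one, Nat.cast_zero]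
  refine .div (Finset.measurable_sum _ fun i _ => .ite ?_ measurable_const measurable_const)
    ((measurable_of_countable fun R : ℕ => ((max R 1 : ℕ) : ℝ)).comp (measurable_suCount c))
  exact (measurableSet_le (measurable_pi_apply i)
    ((measurable_of_countable (threshold c)).comp (measurable_suCount c))).inter
      (.const (h i = false))

lemma norm_fdp_le (c : Fin n → ℝ) (h : Fin n → Bool) (p : Fin n → ℝ) : ‖fdp c h p‖ ≤ n := by
  have hR : (1 : ℝ) ≤ (max (suCount c p) 1 : ℕ) := by exact_mod_cast le_max_right _ _
  rw [fdp, Real.norm_of_nonneg (by positivity)]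
  refine (div_le_self (by positivity) hR).trans ?_
  exact_mod_cast (Finset.card_le_univ _).trans_eq (Fintype.card_fin n)

end StepUp

noncomputable def bhCrit (n : ℕ) (a : ℝ) : Fin n → ℝ := fun k => (k.1 + 1 : ℝ) / n * a

section BH

variable {n : ℕ} {a : ℝ}

lemma bhCrit_monotone (ha : 0 ≤ a) : Monotone (bhCrit n a) := fun k l hkl => by
  unfold bhCrit
  gcongr
  exact_mod_cast hkl

lemma bhCrit_nonneg (ha : 0 ≤ a) : 0 ≤ bhCrit n a := fun k => by
  unfold bhCrit
  positivity

lemma bhCrit_le_one (ha : a ∈ Set.Icc 0 1) : bhCrit n a ≤ 1 := fun k => by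
  have hk : ((k.1 + 1 : ℕ) : ℝ) ≤ n := by exact_mod_cast k.isLt
  calc bhCrit n a k ≤ 1 * 1 := by
        unfold bhCrit
        gcongr
        · exact ha.1
        · exact div_le_one_of_le₀ (by exact_mod_cast hk) n.cast_nonneg
        · exact ha.2
    _ = 1 := one_mul 1

lemma threshold_bhCrit {R : ℕ} (hR : R ≤ n) : threshold (bhCrit n a) R = R / n * a := by
  unfold threshold bhCrit
  split_ifs with h
  · rw [Nat.cast_sub h.1]
    ring
  · obtain rfl : R = 0 := by omega
    simp

lemma threshold_bhCrit_mul_inv {R : ℕ} (hR0 : 1 ≤ R) (hR : R ≤ n) :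
    threshold (bhCrit n a) R * (R : ℝ)⁻¹ = a / n := by
  have : (R : ℝ) ≠ 0 := by positivity
  rw [threshold_bhCrit hR]
  field_simp

end BH

def biPValues {n : ℕ} (h : Fin n → Bool) (ξ u : Fin n → ℝ) : Fin n → ℝ :=
  fun j => if h j then ξ j else u j

lemma measurable_biPValues {n : ℕ} :
    Measurable fun x : ((Fin n → Bool) × (Fin n → ℝ)) × (Fin n → ℝ) =>
      biPValues x.1.1 x.1.2 x.2 :=
  measurable_pi_lambda _ fun j =>
    .ite (measurableSet_eq_fun ((measurable_pi_apply j).comp measurable_fst.fst) measurable_const)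
      measurable_fst.snd.eval measurable_snd.eval

lemma measurable_fdp_biPValues {n : ℕ} (c : Fin n → ℝ) :
    Measurable fun x : ((Fin n → Bool) × (Fin n → ℝ)) × (Fin n → ℝ) =>
      fdp c x.1.1 (biPValues x.1.1 x.1.2 x.2) := by
  have hp : Measurable fun x : ((Fin n → Bool) × (Fin n → ℝ)) × (Fin n → ℝ) =>
      (x.1.1, biPValues x.1.1 x.1.2 x.2) :=
    .prodMk (by fun_prop) measurable_biPValues
  -- without the ascription, unifying with the goal times out
  exact ((measurable_fdp c).comp hp :)

section LeaveOneOut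

variable {m : ℕ} (c : Fin (m + 1) → ℝ) (h : Fin (m + 1) → Bool) (ξ : Fin (m + 1) → ℝ)
  (i : Fin (m + 1))

/-- The number `R_i` of step-up rejections once `p i` is replaced by `0`, as a function of the
uniforms attached to the other hypotheses. -/
noncomputable def suCountZeroAt (z : Fin m → ℝ) : ℕ :=
  suCount c (i.insertNth 0 (biPValues (i.removeNth h) (i.removeNth ξ) z))

lemma measurable_suCountZeroAt : Measurable (suCountZeroAt c h ξ i) := by
  have hp : Measurable fun z => ((0 : ℝ), biPValues (i.removeNth h) (i.removeNth ξ) z) :=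
    measurable_const.prodMk (measurable_biPValues.comp (measurable_prodMk_left (x := (_, _))))
  exact (measurable_suCount c).comp
    ((MeasurableEquiv.piFinSuccAbove (fun _ => ℝ) i).symm.measurable.comp hp)

lemma one_le_suCountZeroAt (hc0 : 0 ≤ c) (z : Fin m → ℝ) : 1 ≤ suCountZeroAt c h ξ i z :=
  one_le_suCount_of_le (i := i) (by simpa [Fin.insertNth_apply_same] using hc0 _)

lemma ite_le_threshold_update_biPValues (hi : h i = false) (u : Fin (m + 1) → ℝ) :
    (if biPValues h ξ u i ≤ threshold c (suCount c (Function.update (biPValues h ξ u) i 0))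
      then ((suCount c (Function.update (biPValues h ξ u) i 0) : ℕ) : ℝ)⁻¹ else 0) =
    if u i ≤ threshold c (suCountZeroAt c h ξ i (i.removeNth u))
      then (suCountZeroAt c h ξ i (i.removeNth u) : ℝ)⁻¹ else 0 := by
  rw [← Fin.insertNth_removeNth, show biPValues h ξ u i = u i by simp [biPValues, hi]]
  rfl

end LeaveOneOut

section Uniform

local notation "unif" => volume.restrict (Set.Ioo (0 : ℝ) 1)

instance : IsProbabilityMeasure unif := ⟨by simp⟩

lemma integral_uniform_ite_le {t : ℝ} (ht : t ∈ Set.Icc 0 1) (b : ℝ) :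
    ∫ y, (if y ≤ t then b else 0) ∂unif = t * b := by
  have hvol : volume (Set.Iic t ∩ Set.Ioo 0 1) = ENNReal.ofReal t := by
    refine le_antisymm ?_ ?_
    · calc volume (Set.Iic t ∩ Set.Ioo 0 1) ≤ volume (Set.Icc 0 t) :=
            measure_mono fun y hy => ⟨hy.2.1.le, hy.1⟩
        _ = ENNReal.ofReal t := by simp
    · calc ENNReal.ofReal t = volume (Set.Ioo 0 t) := by simp
        _ ≤ volume (Set.Iic t ∩ Set.Ioo 0 1) :=
            measure_mono fun y hy => ⟨hy.2.le, hy.1, hy.2.trans_le ht.2⟩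
  have hind : (fun y => if y ≤ t then b else 0) = (Set.Iic t).indicator fun _ => b := by
    ext y
    simp [Set.indicator_apply]
  rw [hind, integral_indicator_const _ measurableSet_Iic, measureReal_def,
    Measure.restrict_apply measurableSet_Iic, hvol, ENNReal.toReal_ofReal ht.1, smul_eq_mul]

section Coordinate

variable {m : ℕ} (i : Fin (m + 1)) {t φ : (Fin m → ℝ) → ℝ}

lemma integrable_uniform_prod_ite_le (ht : Measurable t)
    (hφ : Integrable φ (Measure.pi fun _ => unif)) :
    Integrable (fun x : ℝ × (Fin m → ℝ) => if x.1 ≤ t x.2 then φ x.2 else 0)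
      (Measure.prod unif (Measure.pi fun _ => unif)) := by
  have hs : MeasurableSet {x : ℝ × (Fin m → ℝ) | x.1 ≤ t x.2} :=
    measurableSet_le measurable_fst (ht.comp measurable_snd)
  refine ((hφ.comp_snd unif).indicator hs).congr (.of_forall fun x => ?_)
  simp [Set.indicator_apply]

lemma integrable_pi_ite_le_removeNth (ht : Measurable t)
    (hφ : Integrable φ (Measure.pi fun _ => unif)) :
    Integrable (fun u : Fin (m + 1) → ℝ => if u i ≤ t (i.removeNth u) then φ (i.removeNth u) else 0)
      (Measure.pi fun _ => unif) :=
  ((measurePreserving_piFinSuccAbove (fun _ => unif) i).integrable_comp_emb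
    (MeasurableEquiv.piFinSuccAbove (fun _ => ℝ) i).measurableEmbedding
    (g := fun x => if x.1 ≤ t x.2 then φ x.2 else 0)).2
    (integrable_uniform_prod_ite_le ht hφ)

lemma integral_pi_ite_le_removeNth (ht : Measurable t) (ht01 : ∀ z, t z ∈ Set.Icc 0 1)
    (hφ : Integrable φ (Measure.pi fun _ => unif)) :
    ∫ u, (if u i ≤ t (i.removeNth u) then φ (i.removeNth u) else 0) ∂(Measure.pi fun _ => unif) =
      ∫ z, t z * φ z ∂(Measure.pi fun _ => unif) := by
  calc _ = ∫ x, (if x.1 ≤ t x.2 then φ x.2 else 0) ∂(Measure.prod unif (Measure.pi fun _ => unif)) :=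
        (measurePreserving_piFinSuccAbove (fun _ => unif) i).integral_comp'
          (fun x => if x.1 ≤ t x.2 then φ x.2 else 0)
    _ = ∫ z, ∫ y, (if y ≤ t z then φ z else 0) ∂unif ∂(Measure.pi fun _ => unif) :=
        integral_prod_symm _ (integrable_uniform_prod_ite_le ht hφ)
    _ = ∫ z, t z * φ z ∂(Measure.pi fun _ => unif) := by
        simp_rw [integral_uniform_ite_le (ht01 _)]

end Coordinate

section FixedConfiguration

variable {m : ℕ} {c : Fin (m + 1) → ℝ} (h : Fin (m + 1) → Bool) (ξ : Fin (m + 1) → ℝ)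

lemma integrable_inv_suCountZeroAt (hc0 : 0 ≤ c) (i : Fin (m + 1)) :
    Integrable (fun z => (suCountZeroAt c h ξ i z : ℝ)⁻¹) (Measure.pi fun _ => unif) := by
  refine .of_bound ((measurable_of_countable fun R : ℕ => (R : ℝ)⁻¹).comp
    (measurable_suCountZeroAt c h ξ i)).aestronglyMeasurable 1 (.of_forall fun z => ?_)
  rw [norm_inv, Real.norm_natCast]
  exact inv_le_one_of_one_le₀ (by exact_mod_cast one_le_suCountZeroAt c h ξ i hc0 z)

lemma integral_fdp_biPValues (hc : Monotone c) (hc0 : 0 ≤ c) (hc1 : c ≤ 1) :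
    ∫ u, fdp c h (biPValues h ξ u) ∂(Measure.pi fun _ => unif) =
      ∑ i with h i = false, ∫ z, threshold c (suCountZeroAt c h ξ i z) *
        (suCountZeroAt c h ξ i z : ℝ)⁻¹ ∂(Measure.pi fun _ => unif) := by
  have ht (i) : Measurable fun z => threshold c (suCountZeroAt c h ξ i z) :=
    (measurable_of_countable (threshold c)).comp (measurable_suCountZeroAt c h ξ i)
  simp_rw [fdp_eq_sum hc hc0]
  rw [integral_finsetSum _ fun i hi => ?_]
  · refine Finset.sum_congr rfl fun i hi => ?_
    simp_rw [ite_le_threshold_update_biPValues c h ξ i (Finset.mem_filter.1 hi).2]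
    exact integral_pi_ite_le_removeNth i (ht i) (fun _ => threshold_mem_Icc hc0 hc1 _)
      (integrable_inv_suCountZeroAt h ξ hc0 i)
  · simp_rw [ite_le_threshold_update_biPValues c h ξ i (Finset.mem_filter.1 hi).2]
    exact integrable_pi_ite_le_removeNth i (ht i) (integrable_inv_suCountZeroAt h ξ hc0 i)

lemma integral_fdp_bhCrit_biPValues {a : ℝ} (ha : a ∈ Set.Icc 0 1) :
    ∫ u, fdp (bhCrit (m + 1) a) h (biPValues h ξ u) ∂(Measure.pi fun _ => unif) =
      #{i | h i = false} * (a / (m + 1)) := by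
  have hc0 : 0 ≤ bhCrit (m + 1) a := bhCrit_nonneg ha.1
  rw [integral_fdp_biPValues h ξ (bhCrit_monotone ha.1) hc0 (bhCrit_le_one ha)]
  simp_rw [threshold_bhCrit_mul_inv (one_le_suCountZeroAt _ h ξ _ hc0 _) (suCount_le _ _)]
  simp

end FixedConfiguration

end Uniform

lemma fdp_bhCrit_eq {m : ℕ} (a : ℝ) (h : Fin (m + 1) → Bool) (p : Fin (m + 1) → ℝ) :
    fdp (bhCrit (m + 1) a) h p =
      (#{i | p i ≤ (suCount (fun k : Fin (m + 1) => ((k.1 + 1 : ℝ) / (m + 1)) * a) p : ℝ) /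
          (m + 1) * a ∧ h i = false} : ℝ) /
        (max (suCount (fun k : Fin (m + 1) => ((k.1 + 1 : ℝ) / (m + 1)) * a) p) 1 : ℕ) := by
  have hcrit : (fun k : Fin (m + 1) => ((k.1 + 1 : ℝ) / (m + 1)) * a) = bhCrit (m + 1) a := by
    ext k
    simp [bhCrit]
  rw [hcrit, fdp, threshold_bhCrit (suCount_le _ _)]
  push_cast
  rfl

lemma integral_comp_prodMk_eq_integral_integral {Ω β γ E : Type*} [MeasurableSpace Ω]
    [MeasurableSpace β] [MeasurableSpace γ] [NormedAddCommGroup E] [NormedSpace ℝ E]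
    {μ : Measure Ω} [IsFiniteMeasure μ] {W : Ω → β} {V : Ω → γ} (hW : Measurable W)
    (hV : Measurable V) (hWV : IndepFun W V μ) {F : β × γ → E}
    (hF : Integrable F ((μ.map W).prod (μ.map V))) :
    ∫ ω, F (W ω, V ω) ∂μ = ∫ x, ∫ y, F (x, y) ∂(μ.map V) ∂(μ.map W) := by
  have hlaw := (indepFun_iff_map_prod_eq_prod_map_map hW.aemeasurable hV.aemeasurable).1 hWV
  rw [← integral_prod _ hF, ← hlaw, integral_map (hW.prodMk hV).aemeasurable]
  exact hlaw ▸ hF.aestronglyMeasurable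

theorem bh_fdr_BI_model_general {Ω : Type*} [MeasurableSpace Ω]
    (μ : Measure Ω) [IsProbabilityMeasure μ] {m : ℕ}
    (H : Fin (m + 1) → Ω → Bool) (U ξ : Fin (m + 1) → Ω → ℝ)
    (hUmeas : ∀ i, Measurable (U i)) (hξmeas : ∀ i, Measurable (ξ i))
    (hHmeas : ∀ i, Measurable (H i))
    (hUindep : iIndepFun U μ)
    (hUHξ : IndepFun (fun ω => fun i => U i ω)
      (fun ω => ((fun i => H i ω), (fun i => ξ i ω))) μ)
    (hunif : ∀ i, Measure.map (U i) μ = volume.restrict (Set.Ioo (0 : ℝ) 1))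
    (a : ℝ) (ha : a ∈ Set.Ioo (0 : ℝ) 1) :
    ∫ ω,
        (((Finset.univ.filter fun i : Fin (m + 1) =>
            (if H i ω then ξ i ω else U i ω) ≤
              (suCount (fun k : Fin (m + 1) => ((k.1 + 1 : ℝ) / (m + 1)) * a)
                  (fun i => if H i ω then ξ i ω else U i ω) : ℝ) / (m + 1) * a
            ∧ H i ω = false).card : ℝ)
          / (max (suCount (fun k : Fin (m + 1) => ((k.1 + 1 : ℝ) / (m + 1)) * a)
              (fun i => if H i ω then ξ i ω else U i ω)) 1 : ℕ)) ∂μ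
      = (∫ ω, ((Finset.univ.filter fun i => H i ω = false).card : ℝ) ∂μ) / (m + 1) * a := by
  let W : Ω → (Fin (m + 1) → Bool) × (Fin (m + 1) → ℝ) := fun ω => (fun i => H i ω, fun i => ξ i ω)
  have hW : Measurable W := (measurable_pi_lambda _ hHmeas).prodMk (measurable_pi_lambda _ hξmeas)
  have hU : Measurable fun ω i => U i ω := measurable_pi_lambda _ hUmeas
  have hUlaw : μ.map (fun ω i => U i ω) = Measure.pi fun _ => volume.restrict (Set.Ioo 0 1) := by
    simp_rw [hUindep.map_fun_eq_pi_map fun i => (hUmeas i).aemeasurable, hunif]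
  have hF := measurable_fdp_biPValues (bhCrit (m + 1) a)
  calc _ = ∫ ω, fdp (bhCrit (m + 1) a) (W ω).1 (biPValues (W ω).1 (W ω).2 fun i => U i ω) ∂μ := by
        simp_rw [fdp_bhCrit_eq]
        rfl
    _ = ∫ e, ∫ u, fdp (bhCrit (m + 1) a) e.1 (biPValues e.1 e.2 u)
          ∂(μ.map fun ω i => U i ω) ∂(μ.map W) :=
        integral_comp_prodMk_eq_integral_integral hW hU hUHξ.symm
          (.of_bound hF.aestronglyMeasurable _ (.of_forall fun x => norm_fdp_le _ _ _))
    _ = ∫ e, (#{i | e.1 i = false} : ℝ) * (a / (m + 1)) ∂(μ.map W) := by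
        simp_rw [hUlaw, integral_fdp_bhCrit_biPValues _ _ (Set.Ioo_subset_Icc_self ha)]
    _ = ∫ ω, (#{i | H i ω = false} : ℝ) * (a / (m + 1)) ∂μ :=
        integral_map hW.aemeasurable ((measurable_of_countable fun h : Fin (m + 1) → Bool =>
          (#{i | h i = false} : ℝ) * (a / (m + 1))).comp measurable_fst).aestronglyMeasurable
    _ = _ := by
        rw [integral_mul_const]
        ring

/-- Under the Basic Independence model (`p i = (1-H_i)U_i + H_i ξ_i` with `U` i.i.d.
uniform(0,1) independent of `(H, ξ)`), the BH step-up test at level `α ∈ (0,1)` has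
`FDR = (E[N₀]/n)·α`, where `N₀` is the (random) number of true null hypotheses
(`H i = false`). -/
theorem bh_fdr_BI_model {Ω : Type*} [MeasurableSpace Ω]
    (μ : Measure Ω) [IsProbabilityMeasure μ] {m : ℕ}
    (H : Fin (m + 1) → Ω → Bool) (U ξ : Fin (m + 1) → Ω → ℝ)
    (hUmeas : ∀ i, Measurable (U i)) (hξmeas : ∀ i, Measurable (ξ i))
    (hHmeas : ∀ i, Measurable (H i))
    (hUindep : iIndepFun U μ)
    (hUHξ : IndepFun (fun ω => fun i => U i ω)
      (fun ω => ((fun i => H i ω), (fun i => ξ i ω))) μ)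
    (hunif : ∀ i, Measure.map (U i) μ = volume.restrict (Set.Ioo (0 : ℝ) 1))
    (hξrange : ∀ i ω, ξ i ω ∈ Set.Icc (0 : ℝ) 1)
    (a : ℝ) (ha : a ∈ Set.Ioo (0 : ℝ) 1) :
    ∫ ω,
        (((Finset.univ.filter fun i : Fin (m + 1) =>
            (if H i ω then ξ i ω else U i ω) ≤
              (suCount (fun k : Fin (m + 1) => ((k.1 + 1 : ℝ) / (m + 1)) * a)
                  (fun i => if H i ω then ξ i ω else U i ω) : ℝ) / (m + 1) * a
            ∧ H i ω = false).card : ℝ)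
          / (max (suCount (fun k : Fin (m + 1) => ((k.1 + 1 : ℝ) / (m + 1)) * a)
              (fun i => if H i ω then ξ i ω else U i ω)) 1 : ℕ)) ∂μ
      = (∫ ω, ((Finset.univ.filter fun i => H i ω = false).card : ℝ) ∂μ) / (m + 1) * a :=
  bh_fdr_BI_model_general μ H U ξ hUmeas hξmeas hHmeas hUindep hUHξ hunif a ha
end
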